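/- Let S = K[x_1,…,x_n] be a polynomial ring over a field K and let u_1,…,u_k be monomials in S, each of positive degree. Then u_1,…,u_k is a regular sequence on S if and only if the supports supp(u_1),…,supp(u_k) are pairwise disjoint. -/

import Mathlib

open MvPolynomial

variable {K : Type*} [Field K] {σ : Type*}

/-- An ideal of `MvPolynomial σ K` is a monomial ideal if it is generated by monomials. -/
def IsMonomialIdeal (I : Ideal (MvPolynomial σ K)) : Prop :=
  ∃ A : Set (σ →₀ ℕ), I = Ideal.span ((fun a => (monomial a (1 : K))) '' A)

/-- The exponent vectors of the minimal monomial generators of a monomial ideal: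
the monomials in `I` that are minimal with respect to divisibility. -/
def minimalGenerators (I : Ideal (MvPolynomial σ K)) : Set (σ →₀ ℕ) :=
  {a | (monomial a (1 : K)) ∈ I ∧
    ∀ b : σ →₀ ℕ, (monomial b (1 : K)) ∈ I → b ≤ a → b = a}

/-- `p` is a minimal monomial generator of `I`. -/
def IsMinimalGenerator (I : Ideal (MvPolynomial σ K)) (p : MvPolynomial σ K) : Prop :=
  ∃ c ∈ minimalGenerators I, p = monomial c (1 : K)

/-- The `k`-th matching power of `I`: the ideal generated by all products
`u₁ ⋯ u_k` where `u₁, …, u_k` is a regular sequence of monomials contained in `I`. -/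
noncomputable def matchingPower (I : Ideal (MvPolynomial σ K)) (k : ℕ) : Ideal (MvPolynomial σ K) :=
  Ideal.span {p | ∃ us : List (MvPolynomial σ K), us.length = k ∧
    (∀ u ∈ us, u ∈ I ∧ ∃ a : σ →₀ ℕ, u = monomial a (1 : K)) ∧
    RingTheory.Sequence.IsRegular (MvPolynomial σ K) us ∧ p = us.prod}

/-- The monomial grade `ν(I)`: the largest `k` such that `I^[k] ≠ 0`. -/
noncomputable def monomialGrade (I : Ideal (MvPolynomial σ K)) : ℕ :=
  sSup {k | 1 ≤ k ∧ matchingPower I k ≠ ⊥}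

/-- The matching product `I * J`. -/
noncomputable def matchingProduct (I J : Ideal (MvPolynomial σ K)) : Ideal (MvPolynomial σ K) :=
  Ideal.span {p | ∃ a b : σ →₀ ℕ, (monomial a (1 : K)) ∈ I ∧ (monomial b (1 : K)) ∈ J ∧
    RingTheory.Sequence.IsRegular (MvPolynomial σ K)
      [monomial a (1 : K), monomial b (1 : K)] ∧
    p = monomial a (1 : K) * monomial b (1 : K)}

/-- `deg_{x_i}(I)`, the maximal exponent of `x_i` in a minimal generator of `I`. -/
noncomputable def degX (I : Ideal (MvPolynomial σ K)) (i : σ) : ℕ :=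
  sSup {d | ∃ a ∈ minimalGenerators I, a i = d}

/-- The initial degree of `I`: minimal degree of a minimal monomial generator. -/
noncomputable def indeg [Fintype σ] (I : Ideal (MvPolynomial σ K)) : ℕ :=
  sInf ((fun a : σ →₀ ℕ => ∑ i, a i) '' minimalGenerators I)

/-- The depth of `S/I` where `S = MvPolynomial σ K`: the maximal length of a regular
sequence on `S/I` consisting of elements of the graded maximal ideal `(x_1, …, x_n)`. -/
noncomputable def quotDepth [Fintype σ] (I : Ideal (MvPolynomial σ K)) : ℕ :=
  sSup {k | ∃ rs : List (MvPolynomial σ K), rs.length = k ∧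
    (∀ r ∈ rs, r ∈ Ideal.span (Set.range (X : σ → MvPolynomial σ K))) ∧
    RingTheory.Sequence.IsRegular (MvPolynomial σ K ⧸ I) rs}

/-- The index type of the variables `x_{i,j}`, `1 ≤ j ≤ m i`, of a polarization ring. -/
abbrev PolIdx (m : σ → ℕ) : Type _ := (i : σ) × Fin (m i)

/-- The polarization of the monomial `x^a`, inside `K[x_{i,j} : 1 ≤ j ≤ m i]`. -/
noncomputable def polarMon [Fintype σ] (m : σ → ℕ) (a : σ →₀ ℕ) :
    MvPolynomial (PolIdx m) K :=
  ∏ p : PolIdx m, if (p.2 : ℕ) < a p.1 then X p else 1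

/-- The polarization of a monomial ideal `I`, inside `K[x_{i,j} : 1 ≤ j ≤ m i]`:
the ideal generated by the polarizations of the minimal generators of `I`. -/
noncomputable def polarizationIn [Fintype σ] (m : σ → ℕ) (I : Ideal (MvPolynomial σ K)) :
    Ideal (MvPolynomial (PolIdx m) K) :=
  Ideal.span ((polarMon (K := K) m) '' minimalGenerators I)

/-- The normalized depth function
`g_I(k) = depth(S/I^[k]) + |deg I| - n - (indeg(I^[k]) - 1)`. -/
noncomputable def gFun [Fintype σ] (I : Ideal (MvPolynomial σ K)) (k : ℕ) : ℤ :=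
  (quotDepth (matchingPower I k) : ℤ) + (∑ i, (degX I i : ℤ)) - Fintype.card σ
    - ((indeg (matchingPower I k) : ℤ) - 1)

/-- The edge ideal of a finite simple graph. -/
noncomputable def edgeIdeal {n : ℕ} (K : Type*) [Field K] (G : SimpleGraph (Fin n)) :
    Ideal (MvPolynomial (Fin n) K) :=
  Ideal.span {p | ∃ i j : Fin n, G.Adj i j ∧ p = X i * X j}

/-- The matching number of a finite simple graph: the maximal size of a set of
pairwise disjoint edges. -/
noncomputable def matchingNumber {n : ℕ} (G : SimpleGraph (Fin n)) : ℕ :=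
  sSup {k | ∃ s : Finset (Sym2 (Fin n)), s.card = k ∧ ↑s ⊆ G.edgeSet ∧
    ∀ e ∈ s, ∀ f ∈ s, e ≠ f → ∀ v : Fin n, v ∈ e → v ∉ f}

/-- The edge ideal of a vertex-weighted oriented graph with directed edge set `E`
and weight function `w`. -/
noncomputable def weightedEdgeIdeal {n : ℕ} (K : Type*) [Field K] (E : Set (Fin n × Fin n))
    (w : Fin n → ℕ) : Ideal (MvPolynomial (Fin n) K) :=
  Ideal.span {p | ∃ q ∈ E, p = X q.1 * X q.2 ^ w q.2}


lemma aux_smul_top {R : Type*} [CommRing R] (I : Ideal R) : (I • ⊤ : Submodule R R) = I := by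
  rw [smul_eq_mul, Ideal.mul_top]

lemma isSMulRegular_quotient_iff {R : Type*} [CommRing R] (p : Ideal R) (r : R) :
    IsSMulRegular (R ⧸ (p • ⊤ : Submodule R R)) r ↔ ∀ z : R, r * z ∈ p → z ∈ p := by
  have htop : (p • ⊤ : Submodule R R) = p := aux_smul_top p
  constructor
  · intro h z hz
    have h0 : r • (Submodule.Quotient.mk z : R ⧸ (p • ⊤ : Submodule R R)) = r • 0 := by
      rw [smul_zero, ← Submodule.Quotient.mk_smul, Submodule.Quotient.mk_eq_zero, htop,
        smul_eq_mul]
      exact hz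
    have := h h0
    rwa [Submodule.Quotient.mk_eq_zero, htop] at this
  · intro h x y hxy
    obtain ⟨x, rfl⟩ := Submodule.Quotient.mk_surjective _ x
    obtain ⟨y, rfl⟩ := Submodule.Quotient.mk_surjective _ y
    simp only at hxy
    rw [← Submodule.Quotient.mk_smul, ← Submodule.Quotient.mk_smul, Submodule.Quotient.eq,
      htop, ← smul_sub, smul_eq_mul] at hxy
    rw [Submodule.Quotient.eq, htop]
    exact h _ hxy

lemma take_ideal_eq {K : Type*} [Field K] {n : ℕ} (as : List (Fin n →₀ ℕ)) (j : ℕ) :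
    Ideal.ofList (((as.map fun a => monomial a (1:K))).take j) =
      Ideal.span ((fun a => monomial a (1:K)) '' {a | a ∈ as.take j}) := by
  unfold Ideal.ofList
  congr 1
  ext p
  simp [← List.map_take, List.mem_map, Set.mem_image]

lemma regular_of_disjoint {K : Type*} [Field K] {n : ℕ} (A : Set (Fin n →₀ ℕ))
    (b : Fin n →₀ ℕ) (hdisj : ∀ a ∈ A, Disjoint a.support b.support)
    (z : MvPolynomial (Fin n) K)
    (hz : monomial b (1:K) * z ∈ Ideal.span ((fun a => monomial a (1:K)) '' A)) :
    z ∈ Ideal.span ((fun a => monomial a (1:K)) '' A) := by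
  rw [mem_ideal_span_monomial_image] at hz ⊢
  intro m hm
  have hm' : b + m ∈ (monomial b (1:K) * z).support := by
    rw [mem_support_iff, coeff_monomial_mul, one_mul]
    exact mem_support_iff.mp hm
  obtain ⟨a, ha, hle⟩ := hz _ hm'
  refine ⟨a, ha, ?_⟩
  rw [Finsupp.le_def]
  intro i
  by_cases hi : a i = 0
  · simp [hi]
  · have hib : i ∉ b.support := Finset.disjoint_left.mp (hdisj a ha) (Finsupp.mem_support_iff.mpr hi)
    have hb0 : b i = 0 := Finsupp.notMem_support_iff.mp hib
    have := Finsupp.le_def.mp hle i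
    simp only [Finsupp.add_apply, hb0, zero_add] at this
    exact this

theorem stmt0' {K : Type*} [Field K] {n k : ℕ} (as : List (Fin n →₀ ℕ))
    (hlen : as.length = k) (hpos : ∀ a ∈ as, a ≠ 0) :
    RingTheory.Sequence.IsRegular (MvPolynomial (Fin n) K)
      (as.map fun a => monomial a (1 : K)) ↔
    List.Pairwise (fun a b : Fin n →₀ ℕ => Disjoint a.support b.support) as := by
  classical
  set R := MvPolynomial (Fin n) K
  set f : (Fin n →₀ ℕ) → R := fun a => monomial a (1 : K) with hf
  constructor
  · intro hreg
    have hw := hreg.toIsWeaklyRegular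
    rw [RingTheory.Sequence.isWeaklyRegular_iff] at hw
    rw [List.pairwise_iff_getElem]
    suffices H : ∀ j, ∀ (_ : j < as.length), ∀ i (_ : i < as.length), i < j →
        Disjoint (as[i]).support (as[j]).support by
      intro i j hi hj hij; exact H j hj i hi hij
    intro j
    induction j using Nat.strong_induction_on with
    | _ j IH =>
      intro hj i hi hij
      by_contra hnd
      have hpd : ∀ k l (hk : k < j) (hl : l < j), k ≠ l →
          Disjoint (as[k]'(hk.trans hj)).support (as[l]'(hl.trans hj)).support := by
        intro k l hk hl hkl
        rcases lt_or_gt_of_ne hkl with h | h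
        · exact IH l hl (hl.trans hj) k (hk.trans hj) h
        · exact (IH k hk (hk.trans hj) l (hl.trans hj) h).symm
      obtain ⟨v, hv⟩ := Finset.not_disjoint_iff.mp hnd
      have hvi : (as[i]) v ≠ 0 := Finsupp.mem_support_iff.mp hv.1
      have hvj : (as[j]) v ≠ 0 := Finsupp.mem_support_iff.mp hv.2
      set m := min ((as[i]) v) ((as[j]) v) with hm
      have hm1 : m ≤ (as[i]) v := min_le_left _ _
      have hm2 : m ≤ (as[j]) v := min_le_right _ _
      have hmpos : 0 < m := lt_min (Nat.pos_of_ne_zero hvi) (Nat.pos_of_ne_zero hvj)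
      set c : Fin n →₀ ℕ := as[i] - Finsupp.single v m with hc
      have hcw : ∀ w, c w = (as[i]) w - (if v = w then m else 0) := by
        intro w; rw [hc, Finsupp.tsub_apply, Finsupp.single_apply]
      have hreg_j := hw j (by simpa using hj)
      rw [List.getElem_map, take_ideal_eq] at hreg_j
      rw [isSMulRegular_quotient_iff] at hreg_j
      have hiA : as[i] ∈ {a | a ∈ as.take j} := by
        have h1 : (as.take j)[i]'(by simp; omega) = as[i] := List.getElem_take
        exact h1 ▸ List.getElem_mem _
      have hfeq : f (as[j]) * f c = monomial (as[j] + c) (1 : K) := by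
        rw [hf]
        simp only
        rw [monomial_mul, one_mul]
      have hmem : f (as[j]) * f c ∈ Ideal.span ((fun a => monomial a (1:K)) '' {a | a ∈ as.take j}) := by
        rw [hfeq, mem_ideal_span_monomial_image]
        intro xi hxi
        rw [support_monomial, if_neg one_ne_zero, Finset.mem_singleton] at hxi
        subst hxi
        refine ⟨as[i], hiA, ?_⟩
        rw [Finsupp.le_def]
        intro w
        rw [Finsupp.add_apply]
        by_cases hw' : v = w
        · subst hw'
          have hcv : c v = as[i] v - m := by rw [hcw v, if_pos rfl]
          rw [hcv]; omega
        · have hcv : c w = as[i] w := by rw [hcw w, if_neg hw']; omega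
          rw [hcv]; omega
      have hcmem := hreg_j _ hmem
      rw [mem_ideal_span_monomial_image] at hcmem
      have hcsupp : c ∈ (f c).support := by
        rw [hf]
        simp only
        rw [support_monomial, if_neg one_ne_zero]
        exact Finset.mem_singleton_self c
      obtain ⟨a, ha, hale⟩ := hcmem c hcsupp
      obtain ⟨kk, hkk, hkeq⟩ := List.getElem_of_mem ha
      have hkk' : kk < j := by
        have := (List.length_take : (as.take j).length = _) ▸ hkk; omega
      have hkas : (as.take j)[kk] = as[kk]'(hkk'.trans hj) := List.getElem_take
      rw [hkas] at hkeq
      by_cases hk : kk = i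
      · subst hk
        rw [← hkeq] at hale
        have := Finsupp.le_def.mp hale v
        rw [hcw v, if_pos rfl] at this
        omega
      · have hne : (as[kk]'(hkk'.trans hj)) ≠ 0 := hpos _ (List.getElem_mem _)
        obtain ⟨w, hw'⟩ := Finsupp.support_nonempty_iff.mpr hne
        have h1 : (as[kk]'(hkk'.trans hj)) w ≠ 0 := Finsupp.mem_support_iff.mp hw'
        have h2 : (as[i]) w ≠ 0 := by
          have h3 := Finsupp.le_def.mp (hkeq ▸ hale) w
          rw [hcw w] at h3
          intro h0; rw [h0] at h3; omega
        have := hpd kk i hkk' hij hk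
        exact (Finset.disjoint_left.mp this hw') (Finsupp.mem_support_iff.mpr h2)
  · intro hpw
    have hpw' := List.pairwise_iff_getElem.mp hpw
    constructor
    · rw [RingTheory.Sequence.isWeaklyRegular_iff]
      intro j hj
      have hj' : j < as.length := by simpa using hj
      rw [List.getElem_map, take_ideal_eq, isSMulRegular_quotient_iff]
      intro z hz
      refine regular_of_disjoint _ _ ?_ z hz
      intro a ha
      obtain ⟨kk, hkk, hkeq⟩ := List.getElem_of_mem ha
      have hkk' : kk < j := by have := (List.length_take : (as.take j).length = _) ▸ hkk; omega
      have hkas : (as.take j)[kk] = as[kk]'(hkk'.trans hj') := List.getElem_take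
      rw [hkas] at hkeq
      rw [← hkeq]
      exact hpw' kk j (hkk'.trans hj') hj' hkk'
    · intro htop
      have h1 : (1 : R) ∈ Ideal.ofList (as.map f) := by
        rw [← aux_smul_top (Ideal.ofList (as.map f)), ← htop]; trivial
      have hset : {r : R | r ∈ as.map f} = (fun a => monomial a (1:K)) '' {a | a ∈ as} := by
        ext p; simp [hf, List.mem_map, Set.mem_image]
      rw [Ideal.ofList, hset, mem_ideal_span_monomial_image] at h1
      have h0 : (0 : Fin n →₀ ℕ) ∈ (1 : R).support := by
        rw [mem_support_iff]; simp
      obtain ⟨a, ha, hle⟩ := h1 0 h0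
      exact hpos a ha (le_bot_iff.mp hle)


theorem stmt0 {K : Type*} [Field K] {n k : ℕ} (as : List (Fin n →₀ ℕ))
    (hlen : as.length = k) (hpos : ∀ a ∈ as, a ≠ 0) :
    RingTheory.Sequence.IsRegular (MvPolynomial (Fin n) K)
      (as.map fun a => monomial a (1 : K)) ↔
    List.Pairwise (fun a b : Fin n →₀ ℕ => Disjoint a.support b.support) as :=
  stmt0' as hlen hpos
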